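/- arXiv:1705.03827 — 3 statements merged into one kernel-verified Lean document; each statement's English description precedes it below -/
import Mathlib

section
/- For every fixed y ∈ ℝ, as N → ∞, S_N²(y)/N converges ℙ-almost surely to ((𝔼[X₁]/f)·k₋₁(y) − F(y))·(1 − F(y)) − (𝔼[X₁]/f)·(k₋₁(y) − 𝔼[X₁⁻¹]F(y))·F(y) − (f²/d)·(F(y) − k₁(y)/𝔼[X₁])², where k_α(y) = 𝔼[X₁^α 1{Y₁ ≤ y}] for α = ±1 and d = f(1 − 𝔼[X₁²]/𝔼[X₁]²) + f(1−f)·𝔼[X₁²]/𝔼[X₁]². (Lemma 3, second statement, eq. (limite_s2n).) -/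
/-!
Writing `aᵢ = 1{Yᵢ ≤ y} − F_N(y)`, the quantity `S_N²(y)` is the weighted residual sum of squares
of the `aᵢ` regressed on the `πᵢ`; expanding the square gives `S_N² = A − B²/C` with
`A = ∑ (πᵢ⁻¹ − 1) aᵢ²`, `B = ∑ (1 − πᵢ) aᵢ` and `C = ∑ πᵢ (1 − πᵢ)`. Because `πᵢ` is proportional
to `Xᵢ` and indicators are idempotent, `A/N`, `B/N` and `C/N` are rational functions of `n_N/N`
and of six sample means of functions of `(Yᵢ, Xᵢ)`. By the strong law of large numbers these
means converge almost surely, and the rational function is continuous at the limit because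
`C/N → d ≠ 0`.
-/

open MeasureTheory ProbabilityTheory Filter Topology

/-- First-order inclusion probability `πᵢ = n_N Xᵢ / ∑_{j<N} Xⱼ`. -/
noncomputable def incl {Ω : Type*} (X : ℕ → Ω → ℝ) (n : ℕ → ℕ) (N i : ℕ) (ω : Ω) : ℝ :=
  (n N : ℝ) * X i ω / ∑ j ∈ Finset.range N, X j ω

/-- Indicator `1{Yᵢ ≤ y}`. -/
noncomputable def indLE {Ω : Type*} (Y : ℕ → Ω → ℝ) (y : ℝ) (i : ℕ) (ω : Ω) : ℝ :=
  if Y i ω ≤ y then 1 else 0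

/-- Population distribution function `F_N(y) = N⁻¹ ∑_{i<N} 1{Yᵢ ≤ y}`. -/
noncomputable def empDF {Ω : Type*} (Y : ℕ → Ω → ℝ) (y : ℝ) (N : ℕ) (ω : Ω) : ℝ :=
  (N : ℝ)⁻¹ * ∑ i ∈ Finset.range N, indLE Y y i ω

/-- The quantity `Z_{i,N}(y)` of Lemma 3 of the paper. -/
noncomputable def Zin {Ω : Type*} (Y X : ℕ → Ω → ℝ) (n : ℕ → ℕ) (y : ℝ) (i N : ℕ)
    (ω : Ω) : ℝ :=
  (indLE Y y i ω - empDF Y y N ω) -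
    incl X n N i ω *
      (∑ j ∈ Finset.range N, (1 - incl X n N j ω) * (indLE Y y j ω - empDF Y y N ω)) /
      (∑ j ∈ Finset.range N, incl X n N j ω * (1 - incl X n N j ω))

/-- The quantity `S_N²(y) = ∑_{i<N} (πᵢ⁻¹ − 1) Z_{i,N}(y)²` of Lemma 3 of the paper. -/
noncomputable def SN2 {Ω : Type*} (Y X : ℕ → Ω → ℝ) (n : ℕ → ℕ) (y : ℝ) (N : ℕ)
    (ω : Ω) : ℝ :=
  ∑ i ∈ Finset.range N, ((incl X n N i ω)⁻¹ - 1) * (Zin Y X n y i N ω) ^ 2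

theorem Finset.sum_inv_sub_one_mul_sub_mul_div_sq {ι : Type*} (s : Finset ι) (π a : ι → ℝ)
    (hπ : ∀ i ∈ s, π i ≠ 0) :
    ∑ i ∈ s, ((π i)⁻¹ - 1) *
        (a i - π i * (∑ j ∈ s, (1 - π j) * a j) / ∑ j ∈ s, π j * (1 - π j)) ^ 2 =
      ∑ i ∈ s, ((π i)⁻¹ - 1) * a i ^ 2 -
        (∑ j ∈ s, (1 - π j) * a j) ^ 2 / ∑ j ∈ s, π j * (1 - π j) := by
  set B := ∑ j ∈ s, (1 - π j) * a j
  set C := ∑ j ∈ s, π j * (1 - π j)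
  have hterm : ∀ i ∈ s, ((π i)⁻¹ - 1) * (a i - π i * B / C) ^ 2 =
      ((π i)⁻¹ - 1) * a i ^ 2 - 2 * (B / C) * ((1 - π i) * a i) +
        (B / C) ^ 2 * (π i * (1 - π i)) := by
    intro i hi
    have := hπ i hi
    field_simp
    ring
  rw [Finset.sum_congr rfl hterm, Finset.sum_add_distrib, Finset.sum_sub_distrib,
    ← Finset.mul_sum, ← Finset.mul_sum]
  rcases eq_or_ne C 0 with hC | hC
  · simp [hC]
  · field_simp
    ring

noncomputable def sampleMean (g : ℕ → ℝ) (N : ℕ) : ℝ := (∑ i ∈ Finset.range N, g i) / N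

section SampleMean

variable (x e : ℕ → ℝ) (c : ℝ) {N : ℕ}

theorem sum_eq_mul_sampleMean (hN : N ≠ 0) :
    ∑ i ∈ Finset.range N, e i = N * sampleMean e N :=
  (mul_div_cancel₀ _ (Nat.cast_ne_zero.2 hN)).symm

theorem sum_sub_sampleMean (hN : N ≠ 0) :
    ∑ i ∈ Finset.range N, (e i - sampleMean e N) = 0 := by
  rw [Finset.sum_sub_distrib, Finset.sum_const, Finset.card_range, nsmul_eq_mul,
    sum_eq_mul_sampleMean e hN, sub_self]

theorem sum_one_sub_mul_mul_sub_sampleMean_div (hN : N ≠ 0) :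
    (∑ i ∈ Finset.range N, (1 - c * x i) * (e i - sampleMean e N)) / N =
      c * (sampleMean e N * sampleMean x N - sampleMean (fun i => x i * e i) N) := by
  have hterm : ∀ i, (1 - c * x i) * (e i - sampleMean e N) =
      (e i - sampleMean e N) + c * sampleMean e N * x i - c * (x i * e i) := fun i => by ring
  simp only [hterm, Finset.sum_sub_distrib, Finset.sum_add_distrib, sum_sub_sampleMean e hN,
    ← Finset.mul_sum]
  simp only [sampleMean]
  ring

theorem sum_mul_mul_one_sub_mul_div :
    (∑ i ∈ Finset.range N, c * x i * (1 - c * x i)) / N =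
      c * sampleMean x N - c ^ 2 * sampleMean (fun i => x i ^ 2) N := by
  have hterm : ∀ i, c * x i * (1 - c * x i) = c * x i - c ^ 2 * x i ^ 2 := fun i => by ring
  simp only [hterm, Finset.sum_sub_distrib, ← Finset.mul_sum, sampleMean]
  ring

theorem sum_inv_mul_sub_one_mul_sq_sub_sampleMean_div (he : ∀ i, IsIdempotentElem (e i))
    (hN : N ≠ 0) :
    (∑ i ∈ Finset.range N, ((c * x i)⁻¹ - 1) * (e i - sampleMean e N) ^ 2) / N =
      c⁻¹ * ((1 - 2 * sampleMean e N) * sampleMean (fun i => (x i)⁻¹ * e i) N +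
        sampleMean e N ^ 2 * sampleMean (fun i => (x i)⁻¹) N) -
      sampleMean e N * (1 - sampleMean e N) := by
  set F := sampleMean e N
  have hterm : ∀ i, ((c * x i)⁻¹ - 1) * (e i - F) ^ 2 =
      c⁻¹ * ((1 - 2 * F) * ((x i)⁻¹ * e i) + F ^ 2 * (x i)⁻¹) - ((1 - 2 * F) * e i + F ^ 2) :=
    fun i => by rw [mul_inv]; linear_combination (c⁻¹ * (x i)⁻¹ - 1) * (he i).eq
  simp only [hterm, Finset.sum_sub_distrib, Finset.sum_add_distrib, ← Finset.mul_sum,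
    Finset.sum_const, Finset.card_range, nsmul_eq_mul]
  have hsum : ∑ i ∈ Finset.range N, e i = N * F := sum_eq_mul_sampleMean e hN
  simp only [sampleMean]
  rw [hsum]
  field_simp
  ring

end SampleMean

/-- `S_N²/N` as a function of `n_N/N` and the sample means of `X`, `X²`, `X⁻¹`, `1{Y ≤ y}`,
`X 1{Y ≤ y}`, `X⁻¹ 1{Y ≤ y}`; the last denominator is `C/N`, which tends to
`d = f − f² 𝔼[X²]/𝔼[X]²`. -/
noncomputable def s2OfMoments (f μ μ₂ μinv F k₁ kinv : ℝ) : ℝ :=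
  (μ / f * kinv - F) * (1 - F) - μ / f * (kinv - μinv * F) * F -
    f ^ 2 / (f - f ^ 2 * μ₂ / μ ^ 2) * (F - k₁ / μ) ^ 2

theorem Filter.Tendsto.s2OfMoments {α : Type*} {l : Filter α}
    {f μ μ₂ μinv F k₁ kinv : α → ℝ} {f₀ μ₀ μ₂₀ μinv₀ F₀ k₁₀ kinv₀ : ℝ}
    (hf : Tendsto f l (𝓝 f₀)) (hμ : Tendsto μ l (𝓝 μ₀)) (hμ₂ : Tendsto μ₂ l (𝓝 μ₂₀))
    (hμinv : Tendsto μinv l (𝓝 μinv₀)) (hF : Tendsto F l (𝓝 F₀)) (hk₁ : Tendsto k₁ l (𝓝 k₁₀))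
    (hkinv : Tendsto kinv l (𝓝 kinv₀)) (hf₀ : f₀ ≠ 0) (hμ₀ : μ₀ ≠ 0)
    (hd₀ : f₀ - f₀ ^ 2 * μ₂₀ / μ₀ ^ 2 ≠ 0) :
    Tendsto (fun a => s2OfMoments (f a) (μ a) (μ₂ a) (μinv a) (F a) (k₁ a) (kinv a)) l
      (𝓝 (s2OfMoments f₀ μ₀ μ₂₀ μinv₀ F₀ k₁₀ kinv₀)) := by
  have hμf := hμ.div hf hf₀
  have hd := hf.sub (((hf.pow 2).mul hμ₂).div (hμ.pow 2) (pow_ne_zero 2 hμ₀))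
  exact (((hμf.mul hkinv).sub hF).mul (tendsto_const_nhds.sub hF)).sub
    ((hμf.mul (hkinv.sub (hμinv.mul hF))).mul hF) |>.sub
    (((hf.pow 2).div hd hd₀).mul ((hF.sub (hk₁.div hμ hμ₀)).pow 2))

section Population

variable {Ω : Type*} (Y X : ℕ → Ω → ℝ) (n : ℕ → ℕ) (y : ℝ)

theorem incl_eq_mul (N i : ℕ) (ω : Ω) :
    incl X n N i ω = (n N : ℝ) / (∑ j ∈ Finset.range N, X j ω) * X i ω :=
  mul_div_right_comm _ _ _

theorem empDF_eq_sampleMean (N : ℕ) (ω : Ω) :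
    empDF Y y N ω = sampleMean (fun i => indLE Y y i ω) N :=
  inv_mul_eq_div _ _

theorem indLE_eq_indicator (i : ℕ) : indLE Y y i = {ω | Y i ω ≤ y}.indicator 1 := by
  ext ω
  simp [indLE, Set.indicator]

theorem isIdempotentElem_indLE (i : ℕ) (ω : Ω) : IsIdempotentElem (indLE Y y i ω) := by
  unfold indLE
  split_ifs <;> simp [IsIdempotentElem]

theorem norm_indLE_le_one (i : ℕ) (ω : Ω) : ‖indLE Y y i ω‖ ≤ 1 := by
  unfold indLE
  split_ifs <;> norm_num

section Measure

variable [MeasurableSpace Ω] {P : Measure Ω} {i : ℕ}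

theorem measurable_indLE (hY : Measurable (Y i)) : Measurable (indLE Y y i) := by
  rw [indLE_eq_indicator]
  exact measurable_const.indicator (measurableSet_le hY measurable_const)

theorem integrable_indLE [IsFiniteMeasure P] (hY : Measurable (Y i)) :
    Integrable (indLE Y y i) P := by
  rw [indLE_eq_indicator]
  exact (integrable_const 1).indicator (measurableSet_le hY measurable_const)

theorem MeasureTheory.Integrable.mul_indLE {g : Ω → ℝ} (hg : Integrable g P)
    (hY : Measurable (Y i)) :
    Integrable (fun ω => g ω * indLE Y y i ω) P :=
  hg.mul_bdd (measurable_indLE Y y hY).aestronglyMeasurable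
    (ae_of_all _ (norm_indLE_le_one Y y i))

theorem integral_indLE (hY : Measurable (Y i)) :
    ∫ ω, indLE Y y i ω ∂P = (P {ω | Y i ω ≤ y}).toReal := by
  rw [indLE_eq_indicator, integral_indicator_one (measurableSet_le hY measurable_const)]
  rfl

end Measure

theorem SN2_div_eq {N : ℕ} (ω : Ω) (hN : N ≠ 0) (hn : n N ≠ 0) (hX : ∀ i, 0 < X i ω) :
    SN2 Y X n y N ω / N =
      s2OfMoments ((n N : ℝ) / N) (sampleMean (fun i => X i ω) N)
        (sampleMean (fun i => X i ω ^ 2) N) (sampleMean (fun i => (X i ω)⁻¹) N)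
        (sampleMean (fun i => indLE Y y i ω) N) (sampleMean (fun i => X i ω * indLE Y y i ω) N)
        (sampleMean (fun i => (X i ω)⁻¹ * indLE Y y i ω) N) := by
  set c := (n N : ℝ) / ∑ j ∈ Finset.range N, X j ω
  have hN' : (N : ℝ) ≠ 0 := Nat.cast_ne_zero.2 hN
  have hsum : 0 < ∑ j ∈ Finset.range N, X j ω :=
    Finset.sum_pos (fun i _ => hX i) (Finset.nonempty_range_iff.2 hN)
  have hc : c = (n N : ℝ) / N / sampleMean (fun i => X i ω) N :=
    (div_div_div_cancel_right₀ hN' _ _).symm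
  have hπ : ∀ i ∈ Finset.range N, c * X i ω ≠ 0 := fun i _ =>
    mul_ne_zero (div_ne_zero (Nat.cast_ne_zero.2 hn) hsum.ne') (hX i).ne'
  have hdiv : ∀ A B C : ℝ, (A - B ^ 2 / C) / N = A / N - (B / N) ^ 2 / (C / N) := by
    intro A B C
    rcases eq_or_ne C 0 with hC | hC
    · simp [hC]
    · field_simp
  simp only [SN2, Zin, incl_eq_mul]
  rw [Finset.sum_inv_sub_one_mul_sub_mul_div_sq _ (fun i => c * X i ω) _ hπ, hdiv,
    empDF_eq_sampleMean, sum_inv_mul_sub_one_mul_sq_sub_sampleMean_div _ _ _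
      (isIdempotentElem_indLE Y y · ω) hN,
    sum_one_sub_mul_mul_sub_sampleMean_div _ _ _ hN, sum_mul_mul_one_sub_mul_div, hc]
  have hm : sampleMean (fun i => X i ω) N ≠ 0 := div_ne_zero hsum.ne' hN'
  have hf : (n N : ℝ) / N ≠ 0 := div_ne_zero (Nat.cast_ne_zero.2 hn) hN'
  unfold s2OfMoments
  field_simp
  ring

end Population

theorem integral_pos_of_ae_pos {α : Type*} [MeasurableSpace α] {μ : Measure α} [NeZero μ]
    {g : α → ℝ} (hg : Integrable g μ) (hpos : ∀ᵐ x ∂μ, 0 < g x) : 0 < ∫ x, g x ∂μ := by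
  rw [integral_pos_iff_support_of_nonneg_ae (hpos.mono fun _ h => h.le) hg,
    measure_congr (ae_eq_univ.2 (mem_ae_iff.1
      (show Function.support g ∈ ae μ from hpos.mono fun _ h => h.ne')))]
  exact Measure.measure_univ_pos.2 (NeZero.ne μ)

theorem ae_tendsto_sampleMean_comp {Ω β : Type*} [MeasurableSpace Ω] [MeasurableSpace β]
    {P : Measure Ω} {Z : ℕ → Ω → β} (hindep : iIndepFun Z P)
    (hident : ∀ i, IdentDistrib (Z i) (Z 0) P P) {g : β → ℝ} (hg : Measurable g)
    (hint : Integrable (fun ω => g (Z 0 ω)) P) :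
    ∀ᵐ ω ∂P, Tendsto (sampleMean fun i => g (Z i ω)) atTop (𝓝 (∫ ω, g (Z 0 ω) ∂P)) :=
  strong_law_ae_real (fun i ω => g (Z i ω)) hint
    (fun _ _ hij => (hindep.indepFun hij).comp hg hg) (fun i => (hident i).comp hg)

theorem stmt_5_general
    {Ω : Type*} [MeasurableSpace Ω] (P : Measure Ω) [IsProbabilityMeasure P]
    (Y X : ℕ → Ω → ℝ)
    (hmeas : ∀ i, Measurable fun ω => (Y i ω, X i ω))
    (hindep : iIndepFun (fun i ω => (Y i ω, X i ω)) P)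
    (hident : ∀ i, IdentDistrib (fun ω => (Y i ω, X i ω)) (fun ω => (Y 0 ω, X 0 ω)) P P)
    (hpos : ∀ i, ∀ᵐ ω ∂P, 0 < X i ω)
    (hm2 : Integrable (fun ω => X 0 ω ^ 2) P)
    (hminv : Integrable (fun ω => (X 0 ω)⁻¹) P)
    (n : ℕ → ℕ) (f : ℝ) (hf0 : 0 < f)
    (hfN : Tendsto (fun N : ℕ => (n N : ℝ) / N) atTop (𝓝 f))
    (d : ℝ)
    (hd : d = f * (1 - (∫ ω, X 0 ω ^ 2 ∂P) / (∫ ω, X 0 ω ∂P) ^ 2) +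
        f * (1 - f) * ((∫ ω, X 0 ω ^ 2 ∂P) / (∫ ω, X 0 ω ∂P) ^ 2))
    (hdpos : 0 < d) :
    ∀ y : ℝ, ∀ᵐ ω ∂P,
      Tendsto (fun N : ℕ => SN2 Y X n y N ω / N) atTop
        (𝓝 (((∫ ω, X 0 ω ∂P) / f * (∫ ω, (X 0 ω)⁻¹ * indLE Y y 0 ω ∂P) -
              (P {ω | Y 0 ω ≤ y}).toReal) * (1 - (P {ω | Y 0 ω ≤ y}).toReal) -
            (∫ ω, X 0 ω ∂P) / f *
              ((∫ ω, (X 0 ω)⁻¹ * indLE Y y 0 ω ∂P) -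
                (∫ ω, (X 0 ω)⁻¹ ∂P) * (P {ω | Y 0 ω ≤ y}).toReal) *
              (P {ω | Y 0 ω ≤ y}).toReal -
            f ^ 2 / d *
              ((P {ω | Y 0 ω ≤ y}).toReal -
                (∫ ω, X 0 ω * indLE Y y 0 ω ∂P) / ∫ ω, X 0 ω ∂P) ^ 2)) := by
  intro y
  have hY : Measurable (Y 0) := (hmeas 0).fst
  have hg : Measurable fun p : ℝ × ℝ => if p.1 ≤ y then (1 : ℝ) else 0 :=
    Measurable.ite (measurableSet_le measurable_fst measurable_const) measurable_const
      measurable_const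
  have hX_int : Integrable (X 0) P :=
    ((memLp_two_iff_integrable_sq (hmeas 0).snd.aestronglyMeasurable).2 hm2).integrable one_le_two
  have hμ : 0 < ∫ ω, X 0 ω ∂P := integral_pos_of_ae_pos hX_int (hpos 0)
  have hd_eq : d = f - f ^ 2 * (∫ ω, X 0 ω ^ 2 ∂P) / (∫ ω, X 0 ω ∂P) ^ 2 := by
    rw [hd]
    ring
  have hn : ∀ᶠ N : ℕ in atTop, n N ≠ 0 := by
    filter_upwards [hfN.eventually (eventually_gt_nhds hf0)] with N hN hn
    simp [hn] at hN
  filter_upwards [ae_tendsto_sampleMean_comp hindep hident measurable_snd hX_int,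
    ae_tendsto_sampleMean_comp hindep hident (measurable_snd.pow_const 2) hm2,
    ae_tendsto_sampleMean_comp hindep hident measurable_snd.inv hminv,
    ae_tendsto_sampleMean_comp hindep hident hg (integrable_indLE Y y hY),
    ae_tendsto_sampleMean_comp hindep hident (measurable_snd.mul hg) (hX_int.mul_indLE Y y hY),
    ae_tendsto_sampleMean_comp hindep hident (measurable_snd.inv.mul hg) (hminv.mul_indLE Y y hY),
    ae_all_iff.2 hpos] with ω h1 h2 h3 h4 h5 h6 hX
  rw [← integral_indLE Y y hY, hd_eq]
  refine (hfN.s2OfMoments h1 h2 h3 h4 h5 h6 hf0.ne' hμ.ne' (hd_eq ▸ hdpos.ne')).congr' ?_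
  filter_upwards [hn, eventually_ne_atTop 0] with N hn hN
  exact (SN2_div_eq Y X n y ω hN hn hX).symm

/-- Lemma 3, second statement (eq. limite_s2n): a.s. limit of `S_N²(y)/N`. -/
theorem stmt_5
    {Ω : Type*} [MeasurableSpace Ω] (P : Measure Ω) [IsProbabilityMeasure P]
    (Y X : ℕ → Ω → ℝ)
    (hmeas : ∀ i, Measurable fun ω => (Y i ω, X i ω))
    (hindep : iIndepFun (fun i ω => (Y i ω, X i ω)) P)
    (hident : ∀ i, IdentDistrib (fun ω => (Y i ω, X i ω)) (fun ω => (Y 0 ω, X 0 ω)) P P)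
    (hpos : ∀ i, ∀ᵐ ω ∂P, 0 < X i ω)
    (hm2 : Integrable (fun ω => X 0 ω ^ 2) P)
    (hminv : Integrable (fun ω => (X 0 ω)⁻¹) P)
    (n : ℕ → ℕ) (f : ℝ) (hf0 : 0 < f) (hf1 : f < 1)
    (hfN : Tendsto (fun N : ℕ => (n N : ℝ) / N) atTop (𝓝 f))
    (d : ℝ)
    (hd : d = f * (1 - (∫ ω, X 0 ω ^ 2 ∂P) / (∫ ω, X 0 ω ∂P) ^ 2) +
        f * (1 - f) * ((∫ ω, X 0 ω ^ 2 ∂P) / (∫ ω, X 0 ω ∂P) ^ 2))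
    (hdpos : 0 < d) :
    ∀ y : ℝ, ∀ᵐ ω ∂P,
      Tendsto (fun N : ℕ => SN2 Y X n y N ω / N) atTop
        (𝓝 (((∫ ω, X 0 ω ∂P) / f * (∫ ω, (X 0 ω)⁻¹ * indLE Y y 0 ω ∂P) -
              (P {ω | Y 0 ω ≤ y}).toReal) * (1 - (P {ω | Y 0 ω ≤ y}).toReal) -
            (∫ ω, X 0 ω ∂P) / f *
              ((∫ ω, (X 0 ω)⁻¹ * indLE Y y 0 ω ∂P) -
                (∫ ω, (X 0 ω)⁻¹ ∂P) * (P {ω | Y 0 ω ≤ y}).toReal) *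
              (P {ω | Y 0 ω ≤ y}).toReal -
            f ^ 2 / d *
              ((P {ω | Y 0 ω ≤ y}).toReal -
                (∫ ω, X 0 ω * indLE Y y 0 ω ∂P) / ∫ ω, X 0 ω ∂P) ^ 2)) :=
  stmt_5_general P Y X hmeas hindep hident hpos hm2 hminv n f hf0 hfN d hd hdpos
end

section
/- For every fixed y ∈ ℝ, as N → ∞, B_{1,N}(y) := N⁻¹ ∑_{i=1}^N (π_i⁻¹ − 1)(1{Y_i ≤ y} − F_N(y))² converges ℙ-almost surely to ((𝔼[X₁]/f)·k₋₁(y) − F(y))·(1 − F(y)) − (𝔼[X₁]/f)·(k₋₁(y) − 𝔼[X₁⁻¹]·F(y))·F(y), where k₋₁(y) = 𝔼[X₁⁻¹ 1{Y₁ ≤ y}]. (Auxiliary claim (limite_b1) in the proof of Lemma 3.) -/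
open MeasureTheory ProbabilityTheory Filter Topology Finset

/-!
Since `πᵢ⁻¹ = (S_N / n_N) Xᵢ⁻¹` with `S_N = ∑_{j<N} X_j`, expanding the square writes `B_{1,N}(y)`
as a polynomial in `S_N / n_N = (S_N / N) / (n_N / N)` and the sample means of `X`, `X⁻¹`,
`X⁻¹ 1{Y ≤ y}` and `1{Y ≤ y}` (using `1{Y ≤ y}² = 1{Y ≤ y}`). The strong law of large numbers,
applied to these functions of the i.i.d. pairs `(Yᵢ, Xᵢ)`, gives their almost sure limits.
-/

theorem inv_weighted_sample_variance_eq (N : ℕ) (c : ℝ) (a x : ℕ → ℝ) :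
    (N : ℝ)⁻¹ * ∑ i ∈ range N, (c * (x i)⁻¹ - 1) * (a i - (N : ℝ)⁻¹ * ∑ k ∈ range N, a k) ^ 2 =
      c * ((∑ i ∈ range N, (x i)⁻¹ * a i ^ 2) / N
          - 2 * ((∑ i ∈ range N, a i) / N) * ((∑ i ∈ range N, (x i)⁻¹ * a i) / N)
          + ((∑ i ∈ range N, a i) / N) ^ 2 * ((∑ i ∈ range N, (x i)⁻¹) / N))
        - ((∑ i ∈ range N, a i ^ 2) / N - ((∑ i ∈ range N, a i) / N) ^ 2) := by
  rcases Nat.eq_zero_or_pos N with rfl | hN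
  · simp
  set m := (N : ℝ)⁻¹ * ∑ k ∈ range N, a k with hm
  have hterm : ∀ i, (c * (x i)⁻¹ - 1) * (a i - m) ^ 2 =
      c * ((x i)⁻¹ * a i ^ 2) - 2 * m * c * ((x i)⁻¹ * a i) + c * m ^ 2 * (x i)⁻¹
        - a i ^ 2 + 2 * m * a i - m ^ 2 := fun i => by ring
  simp only [hterm, sum_add_distrib, sum_sub_distrib, ← mul_sum, sum_const, card_range,
    nsmul_eq_mul]
  rw [hm]
  field_simp
  ring

theorem tendsto_div_of_tendsto_div_natCast {s t : ℕ → ℝ} {a b : ℝ}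
    (hs : Tendsto (fun N : ℕ => s N / N) atTop (𝓝 a))
    (ht : Tendsto (fun N : ℕ => t N / N) atTop (𝓝 b)) (hb : b ≠ 0) :
    Tendsto (fun N => s N / t N) atTop (𝓝 (a / b)) := by
  refine (hs.div ht hb).congr' ?_
  filter_upwards [eventually_ne_atTop 0] with N hN
  exact div_div_div_cancel_right₀ (Nat.cast_ne_zero.2 hN) _ _

theorem strong_law_ae_comp {Ω α : Type*} [MeasurableSpace Ω] [MeasurableSpace α] {P : Measure Ω}
    {Z : ℕ → Ω → α} (hindep : iIndepFun Z P) (hident : ∀ i, IdentDistrib (Z i) (Z 0) P P)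
    {g : α → ℝ} (hg : Measurable g) (hint : Integrable (g ∘ Z 0) P) :
    ∀ᵐ ω ∂P, Tendsto (fun N : ℕ => (∑ i ∈ range N, g (Z i ω)) / N) atTop
      (𝓝 (∫ ω, g (Z 0 ω) ∂P)) :=
  strong_law_ae_real (fun i => g ∘ Z i) hint
    (fun _ _ hij => (hindep.indepFun hij).comp hg hg) (fun i => (hident i).comp hg)

section Indicator

variable {Ω : Type*} [MeasurableSpace Ω] {P : Measure Ω} {Y : Ω → ℝ}

theorem integral_ite_le_one (hY : Measurable Y) (y : ℝ) :
    ∫ ω, (if Y ω ≤ y then (1 : ℝ) else 0) ∂P = (P {ω | Y ω ≤ y}).toReal := by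
  simpa [Set.indicator_apply, measureReal_def] using
    integral_indicator_one (measurableSet_le hY measurable_const) (μ := P)

theorem MeasureTheory.Integrable.mul_ite_le_one {g : Ω → ℝ} (hg : Integrable g P)
    (hY : Measurable Y) (y : ℝ) :
    Integrable (fun ω => g ω * if Y ω ≤ y then (1 : ℝ) else 0) P := by
  refine (hg.indicator (measurableSet_le hY (measurable_const (a := y)))).congr
    (.of_forall fun ω => ?_)
  simp [Set.indicator_apply]

end Indicator

theorem stmt_10_general
    {Ω : Type*} [MeasurableSpace Ω] (P : Measure Ω) [IsProbabilityMeasure P]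
    (Y X : ℕ → Ω → ℝ)
    (hmeas : ∀ i, Measurable fun ω => (Y i ω, X i ω))
    (hindep : iIndepFun (fun i ω => (Y i ω, X i ω)) P)
    (hident : ∀ i, IdentDistrib (fun ω => (Y i ω, X i ω)) (fun ω => (Y 0 ω, X 0 ω)) P P)
    (hm2 : Integrable (fun ω => X 0 ω ^ 2) P)
    (hminv : Integrable (fun ω => (X 0 ω)⁻¹) P)
    (n : ℕ → ℕ) (f : ℝ) (hf0 : 0 < f)
    (hfN : Tendsto (fun N : ℕ => (n N : ℝ) / N) atTop (𝓝 f)) :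
    ∀ y : ℝ, ∀ᵐ ω ∂P,
      Tendsto (fun N : ℕ => (N : ℝ)⁻¹ * ∑ i ∈ Finset.range N,
          (((n N : ℝ) * X i ω / ∑ j ∈ Finset.range N, X j ω)⁻¹ - 1) *
            ((if Y i ω ≤ y then (1 : ℝ) else 0) -
              (N : ℝ)⁻¹ * ∑ k ∈ Finset.range N, if Y k ω ≤ y then (1 : ℝ) else 0) ^ 2) atTop
        (𝓝 (((∫ ω, X 0 ω ∂P) / f *
                (∫ ω, (X 0 ω)⁻¹ * (if Y 0 ω ≤ y then (1 : ℝ) else 0) ∂P) -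
              (P {ω | Y 0 ω ≤ y}).toReal) * (1 - (P {ω | Y 0 ω ≤ y}).toReal) -
            (∫ ω, X 0 ω ∂P) / f *
              ((∫ ω, (X 0 ω)⁻¹ * (if Y 0 ω ≤ y then (1 : ℝ) else 0) ∂P) -
                (∫ ω, (X 0 ω)⁻¹ ∂P) * (P {ω | Y 0 ω ≤ y}).toReal) *
              (P {ω | Y 0 ω ≤ y}).toReal)) := by
  intro y
  have hY0 : Measurable (Y 0) := measurable_fst.comp (hmeas 0)
  have hX0 : Measurable (X 0) := measurable_snd.comp (hmeas 0)
  have hX : Integrable (X 0) P :=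
    ((memLp_two_iff_integrable_sq hX0.aestronglyMeasurable).2 hm2).integrable one_le_two
  have hI : Integrable (fun ω => if Y 0 ω ≤ y then (1 : ℝ) else 0) P := by
    simpa using (integrable_const (1 : ℝ)).mul_ite_le_one hY0 y
  have hmeasI : Measurable fun p : ℝ × ℝ => if p.1 ≤ y then (1 : ℝ) else 0 :=
    Measurable.ite (measurableSet_le measurable_fst measurable_const) measurable_const
      measurable_const
  have hlawX := strong_law_ae_comp hindep hident (g := fun p => p.2) measurable_snd hX
  have hlawInv := strong_law_ae_comp hindep hident (g := fun p => p.2⁻¹) measurable_snd.inv hminv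
  have hlawInvI := strong_law_ae_comp hindep hident
    (g := fun p => p.2⁻¹ * if p.1 ≤ y then (1 : ℝ) else 0) (measurable_snd.inv.mul hmeasI)
    (hminv.mul_ite_le_one hY0 y)
  have hlawI := strong_law_ae_comp hindep hident hmeasI hI
  filter_upwards [hlawX, hlawInv, hlawInvI, hlawI] with ω hSX hSInv hSInvI hSI
  have hweight : ∀ N i, ((n N : ℝ) * X i ω / ∑ j ∈ range N, X j ω)⁻¹ =
      (∑ j ∈ range N, X j ω) / n N * (X i ω)⁻¹ := fun N i => by
    rw [inv_div, div_mul_eq_div_div, div_eq_mul_inv]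
  simp only [hweight, inv_weighted_sample_variance_eq, ite_pow, one_pow, zero_pow two_ne_zero]
  convert ((tendsto_div_of_tendsto_div_natCast hSX hfN hf0.ne').mul
    ((hSInvI.sub ((hSI.const_mul 2).mul hSInvI)).add ((hSI.pow 2).mul hSInv))).sub
    (hSI.sub (hSI.pow 2)) using 2
  rw [integral_ite_le_one hY0]
  ring

/-- Auxiliary claim (limite_b1) in the proof of Lemma 3: for every fixed `y`,
`B_{1,N}(y) = N⁻¹ ∑ᵢ (πᵢ⁻¹ − 1)(1{Yᵢ ≤ y} − F_N(y))²` converges a.s. to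
`((𝔼[X₁]/f) k₋₁(y) − F(y))(1 − F(y)) − (𝔼[X₁]/f)(k₋₁(y) − 𝔼[X₁⁻¹] F(y)) F(y)`. -/
theorem stmt_10
    {Ω : Type*} [MeasurableSpace Ω] (P : Measure Ω) [IsProbabilityMeasure P]
    (Y X : ℕ → Ω → ℝ)
    (hmeas : ∀ i, Measurable fun ω => (Y i ω, X i ω))
    (hindep : iIndepFun (fun i ω => (Y i ω, X i ω)) P)
    (hident : ∀ i, IdentDistrib (fun ω => (Y i ω, X i ω)) (fun ω => (Y 0 ω, X 0 ω)) P P)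
    (hpos : ∀ i, ∀ᵐ ω ∂P, 0 < X i ω)
    (hm2 : Integrable (fun ω => X 0 ω ^ 2) P)
    (hminv : Integrable (fun ω => (X 0 ω)⁻¹) P)
    (n : ℕ → ℕ) (f : ℝ) (hf0 : 0 < f) (hf1 : f < 1)
    (hfN : Tendsto (fun N : ℕ => (n N : ℝ) / N) atTop (𝓝 f)) :
    ∀ y : ℝ, ∀ᵐ ω ∂P,
      Tendsto (fun N : ℕ => (N : ℝ)⁻¹ * ∑ i ∈ Finset.range N,
          (((n N : ℝ) * X i ω / ∑ j ∈ Finset.range N, X j ω)⁻¹ - 1) *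
            ((if Y i ω ≤ y then (1 : ℝ) else 0) -
              (N : ℝ)⁻¹ * ∑ k ∈ Finset.range N, if Y k ω ≤ y then (1 : ℝ) else 0) ^ 2) atTop
        (𝓝 (((∫ ω, X 0 ω ∂P) / f *
                (∫ ω, (X 0 ω)⁻¹ * (if Y 0 ω ≤ y then (1 : ℝ) else 0) ∂P) -
              (P {ω | Y 0 ω ≤ y}).toReal) * (1 - (P {ω | Y 0 ω ≤ y}).toReal) -
            (∫ ω, X 0 ω ∂P) / f *
              ((∫ ω, (X 0 ω)⁻¹ * (if Y 0 ω ≤ y then (1 : ℝ) else 0) ∂P) -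
                (∫ ω, (X 0 ω)⁻¹ ∂P) * (P {ω | Y 0 ω ≤ y}).toReal) *
              (P {ω | Y 0 ω ≤ y}).toReal)) :=
  stmt_10_general P Y X hmeas hindep hident hm2 hminv n f hf0 hfN
end

section
/- Let c > 0 and K > 0. For each N, let d_{1,N}, …, d_{N,N} ∈ {0,1} and π_{1,N}, …, π_{N,N} ∈ (0,1] be deterministic, with N⁻¹ ∑_{i=1}^N d_{i,N}/π_{i,N} → 1 as N → ∞. Let N*_{1,N}, …, N*_{N,N} be nonnegative real random variables and κ_{1,N}, κ_{2,N}, κ_{3,N} deterministic numbers with κ_{1,N} → 1 and κ_{2,N}, κ_{3,N} ≤ K, such that: (P1) 𝔼[N*_{i,N}] = π_{i,N}⁻¹ d_{i,N} κ_{1,N}; (P2) Var(N*_{i,N}) ≤ π_{i,N}⁻¹ d_{i,N} κ_{2,N}; (P3) |Cov(N*_{i,N}, N*_{h,N})| ≤ (c/N) π_{i,N}⁻¹ π_{h,N}⁻¹ d_{i,N} d_{h,N} κ_{3,N} for i ≠ h. Then N*/N := N⁻¹ ∑_{i=1}^N N*_{i,N} d_{i,N} → 1 in probability as N → ∞. (Proposition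 5 of the paper (lemma_6a), stated conditionally on the sample: the size N* of any pseudo-population whose replication counts satisfy conditions P1–P3 is asymptotically equivalent to the population size N.) -/
open MeasureTheory ProbabilityTheory Filter Topology

/-! Write `X_N = N⁻¹ ∑ᵢ N*ᵢ dᵢ` and `a_N = N⁻¹ ∑ᵢ dᵢ / πᵢ`. By P1 and `dᵢ² = dᵢ`, the mean of
`X_N` is `κ₁ a_N → 1`. Expanding the variance of the sum into covariances, P2 bounds the
diagonal by `K a_N / N` and P3 the off-diagonal part by `c K a_N² / N`, so `Var X_N → 0`
because `a_N` stays bounded. Chebyshev's inequality then gives `X_N → 1` in probability. -/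

section Chebyshev

variable {Ω ι : Type*} [MeasurableSpace Ω] {P : Measure Ω} [IsFiniteMeasure P]

lemma tendsto_measure_abs_sub_ge_of_tendsto_variance {l : Filter ι} {X : ι → Ω → ℝ} {m ε : ℝ}
    (hX : ∀ n, MemLp (X n) 2 P) (hmean : Tendsto (fun n => P[X n]) l (𝓝 m))
    (hvar : Tendsto (fun n => Var[X n; P]) l (𝓝 0)) (hε : 0 < ε) :
    Tendsto (fun n => P {ω | ε ≤ |X n ω - m|}) l (𝓝 0) := by
  have hε2 : 0 < ε / 2 := half_pos hε
  have hbound : ∀ᶠ n in l,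
      P {ω | ε ≤ |X n ω - m|} ≤ ENNReal.ofReal (Var[X n; P] / (ε / 2) ^ 2) := by
    filter_upwards [hmean.eventually (Metric.ball_mem_nhds m hε2)] with n hn
    refine (measure_mono fun ω hω => ?_).trans (meas_ge_le_variance_div_sq (hX n) hε2)
    rw [Real.dist_eq] at hn
    have := abs_sub_le (X n ω) (P[X n]) m
    simp only [Set.mem_ofPred_eq] at hω ⊢
    linarith
  have hlim : Tendsto (fun n => ENNReal.ofReal (Var[X n; P] / (ε / 2) ^ 2)) l (𝓝 0) := by
    simpa using ENNReal.tendsto_ofReal (hvar.div_const ((ε / 2) ^ 2))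
  exact tendsto_of_tendsto_of_tendsto_of_le_of_le' tendsto_const_nhds hlim
    (Eventually.of_forall fun _ => zero_le) hbound

lemma variance_sum_le_of_covariance_le {s : Finset ι} {Y : ι → Ω → ℝ} {v w : ι → ℝ} {C : ℝ}
    (hY : ∀ i ∈ s, MemLp (Y i) 2 P) (hC : 0 ≤ C) (hw : ∀ i ∈ s, 0 ≤ w i)
    (hvar : ∀ i ∈ s, Var[Y i; P] ≤ v i)
    (hcov : ∀ i ∈ s, ∀ j ∈ s, i ≠ j → cov[Y i, Y j; P] ≤ C * w i * w j) :
    Var[fun ω => ∑ i ∈ s, Y i ω; P] ≤ ∑ i ∈ s, v i + C * (∑ i ∈ s, w i) ^ 2 := by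
  classical
  have hentry : ∀ i ∈ s, ∀ j ∈ s,
      cov[Y i, Y j; P] ≤ (if i = j then v i else 0) + C * w i * w j := by
    intro i hi j hj
    have hprod : 0 ≤ C * w i * w j := mul_nonneg (mul_nonneg hC (hw i hi)) (hw j hj)
    split_ifs with hij
    · subst hij
      rw [covariance_self (hY i hi).aemeasurable]
      linarith [hvar i hi]
    · linarith [hcov i hi j hj hij]
  calc Var[fun ω => ∑ i ∈ s, Y i ω; P]
      = ∑ i ∈ s, ∑ j ∈ s, cov[Y i, Y j; P] := variance_fun_sum' hY
    _ ≤ ∑ i ∈ s, ∑ j ∈ s, ((if i = j then v i else 0) + C * w i * w j) :=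
      Finset.sum_le_sum fun i hi => Finset.sum_le_sum fun j hj => hentry i hi j hj
    _ = ∑ i ∈ s, v i + C * (∑ i ∈ s, w i) ^ 2 := by
      rw [sq, Finset.sum_mul_sum, Finset.mul_sum]
      simp only [Finset.sum_add_distrib, Finset.sum_ite_eq, Finset.sum_ite_mem, Finset.inter_self,
        Finset.mul_sum, mul_assoc]

end Chebyshev

section SampleWeighted

variable {Ω ι : Type*} [MeasurableSpace Ω] {P : Measure Ω}

lemma integral_sum_mul_indicator {s : Finset ι} {Z : ι → Ω → ℝ} {d π : ι → ℝ} {κ : ℝ}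
    (hd : ∀ i, d i = 0 ∨ d i = 1) (hZ : ∀ i ∈ s, Integrable (Z i) P)
    (hmean : ∀ i ∈ s, P[Z i] = (π i)⁻¹ * d i * κ) :
    P[fun ω => ∑ i ∈ s, Z i ω * d i] = κ * ∑ i ∈ s, d i / π i := by
  rw [integral_finsetSum s fun i hi => (hZ i hi).mul_const _, Finset.mul_sum]
  refine Finset.sum_congr rfl fun i hi => ?_
  rw [integral_mul_const, hmean i hi]
  rcases hd i with h | h <;> rw [h] <;> ring

lemma variance_mul_indicator_le {Z : Ω → ℝ} {d π κ K : ℝ} (hd : d = 0 ∨ d = 1) (hπ : 0 < π)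
    (hvar : Var[Z; P] ≤ π⁻¹ * d * κ) (hκ : κ ≤ K) :
    Var[fun ω => Z ω * d; P] ≤ K * (d / π) := by
  rw [variance_mul_const]
  rcases hd with rfl | rfl
  · simp
  · have : π⁻¹ * κ ≤ π⁻¹ * K := mul_le_mul_of_nonneg_left hκ (inv_nonneg.mpr hπ.le)
    simp only [mul_one, one_pow, one_div] at hvar ⊢
    linarith

lemma covariance_mul_indicator_le {Z Z' : Ω → ℝ} {d d' π π' κ K C : ℝ}
    (hd : d = 0 ∨ d = 1) (hd' : d' = 0 ∨ d' = 1) (hπ : 0 < π) (hπ' : 0 < π') (hC : 0 ≤ C)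
    (hcov : |cov[Z, Z'; P]| ≤ C * (π⁻¹ * π'⁻¹ * d * d' * κ)) (hκ : κ ≤ K) :
    cov[fun ω => Z ω * d, fun ω => Z' ω * d'; P] ≤ C * K * (d / π) * (d' / π') := by
  rw [covariance_mul_const_left, covariance_mul_const_right]
  rcases hd with rfl | rfl <;> rcases hd' with rfl | rfl
  · simp
  · simp
  · simp
  · have : C * (π⁻¹ * π'⁻¹) * κ ≤ C * (π⁻¹ * π'⁻¹) * K :=
      mul_le_mul_of_nonneg_left hκ (by positivity)
    have := le_abs_self cov[Z, Z'; P]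
    simp only [mul_one, one_div] at hcov ⊢
    linarith

lemma variance_sum_mul_indicator_le [IsFiniteMeasure P] {s : Finset ι} {Z : ι → Ω → ℝ}
    {d π : ι → ℝ} {κ₂ κ₃ K C : ℝ}
    (hd : ∀ i, d i = 0 ∨ d i = 1) (hπ : ∀ i ∈ s, 0 < π i) (hZ : ∀ i ∈ s, MemLp (Z i) 2 P)
    (hK : 0 ≤ K) (hC : 0 ≤ C) (hκ₂ : κ₂ ≤ K) (hκ₃ : κ₃ ≤ K)
    (hvar : ∀ i ∈ s, Var[Z i; P] ≤ (π i)⁻¹ * d i * κ₂)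
    (hcov : ∀ i ∈ s, ∀ j ∈ s, i ≠ j →
      |cov[Z i, Z j; P]| ≤ C * ((π i)⁻¹ * (π j)⁻¹ * d i * d j * κ₃)) :
    Var[fun ω => ∑ i ∈ s, Z i ω * d i; P] ≤
      K * ∑ i ∈ s, d i / π i + C * K * (∑ i ∈ s, d i / π i) ^ 2 := by
  rw [Finset.mul_sum]
  exact variance_sum_le_of_covariance_le (Y := fun i ω => Z i ω * d i)
    (fun i hi => (hZ i hi).mul_const _) (mul_nonneg hC hK)
    (fun i hi => div_nonneg (by rcases hd i with h | h <;> simp [h]) (hπ i hi).le)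
    (fun i hi => variance_mul_indicator_le (hd i) (hπ i hi) (hvar i hi) hκ₂)
    (fun i hi j hj hij =>
      covariance_mul_indicator_le (hd i) (hd j) (hπ i hi) (hπ j hj) hC (hcov i hi j hj hij) hκ₃)

end SampleWeighted

theorem stmt_18_general
    {Ω : Type*} [MeasurableSpace Ω] (P : Measure Ω) [IsProbabilityMeasure P]
    (c K : ℝ) (hc : 0 < c) (hK : 0 < K)
    (d : ℕ → ℕ → ℝ) (π : ℕ → ℕ → ℝ)
    (hd01 : ∀ N i, d N i = 0 ∨ d N i = 1)
    (hπ : ∀ N, ∀ i < N, 0 < π N i ∧ π N i ≤ 1)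
    (hlln : Tendsto (fun N : ℕ => (N : ℝ)⁻¹ * ∑ i ∈ Finset.range N, d N i / π N i) atTop
      (𝓝 1))
    (Nstar : ℕ → ℕ → Ω → ℝ)
    (hNstarL2 : ∀ N, ∀ i < N, MemLp (Nstar N i) 2 P)
    (κ1 κ2 κ3 : ℕ → ℝ)
    (hκ1 : Tendsto κ1 atTop (𝓝 1))
    (hκ2 : ∀ N, κ2 N ≤ K) (hκ3 : ∀ N, κ3 N ≤ K)
    -- P1: conditional mean of the replication counts
    (hP1 : ∀ N, ∀ i < N, ∫ ω, Nstar N i ω ∂P = (π N i)⁻¹ * d N i * κ1 N)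
    -- P2: conditional variance bound
    (hP2 : ∀ N, ∀ i < N, variance (Nstar N i) P ≤ (π N i)⁻¹ * d N i * κ2 N)
    -- P3: conditional covariance bound
    (hP3 : ∀ N, ∀ i < N, ∀ h < N, i ≠ h →
      |∫ ω, (Nstar N i ω - ∫ ω', Nstar N i ω' ∂P) *
          (Nstar N h ω - ∫ ω', Nstar N h ω' ∂P) ∂P| ≤
        c / N * ((π N i)⁻¹ * (π N h)⁻¹ * d N i * d N h * κ3 N)) :
    ∀ ε > (0 : ℝ),
      Tendsto (fun N : ℕ =>
          P {ω | ε ≤ |(N : ℝ)⁻¹ * (∑ i ∈ Finset.range N, Nstar N i ω * d N i) - 1|})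
        atTop (𝓝 0) := by
  intro ε hε
  set a : ℕ → ℝ := fun N => (N : ℝ)⁻¹ * ∑ i ∈ Finset.range N, d N i / π N i
  set X : ℕ → Ω → ℝ := fun N ω => (N : ℝ)⁻¹ * ∑ i ∈ Finset.range N, Nstar N i ω * d N i
  have hπ' : ∀ N, ∀ i ∈ Finset.range N, 0 < π N i := fun N i hi =>
    (hπ N i (Finset.mem_range.mp hi)).1
  have hL2 : ∀ N, ∀ i ∈ Finset.range N, MemLp (Nstar N i) 2 P := fun N i hi =>
    hNstarL2 N i (Finset.mem_range.mp hi)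
  have hXL2 : ∀ N, MemLp (X N) 2 P := fun N =>
    (memLp_finsetSum _ fun i hi => (hL2 N i hi).mul_const (d N i)).const_mul _
  have hmean : ∀ N, P[X N] = κ1 N * a N := by
    intro N
    rw [integral_const_mul, integral_sum_mul_indicator (hd01 N)
      (fun i hi => (hL2 N i hi).integrable one_le_two)
      (fun i hi => hP1 N i (Finset.mem_range.mp hi))]
    ring
  have hvar : ∀ N, Var[X N; P] ≤ (N : ℝ)⁻¹ * (K * a N + c * K * a N ^ 2) := by
    intro N
    calc Var[X N; P]
        = (N : ℝ)⁻¹ ^ 2 * Var[fun ω => ∑ i ∈ Finset.range N, Nstar N i ω * d N i; P] :=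
          variance_const_mul _ _ _
      _ ≤ (N : ℝ)⁻¹ ^ 2 * (K * ∑ i ∈ Finset.range N, d N i / π N i
            + c / N * K * (∑ i ∈ Finset.range N, d N i / π N i) ^ 2) := by
          gcongr
          exact variance_sum_mul_indicator_le (hd01 N) (hπ' N) (hL2 N) hK.le (by positivity)
            (hκ2 N) (hκ3 N) (fun i hi => hP2 N i (Finset.mem_range.mp hi))
            (fun i hi j hj hij =>
              hP3 N i (Finset.mem_range.mp hi) j (Finset.mem_range.mp hj) hij)
      _ = (N : ℝ)⁻¹ * (K * a N + c * K * a N ^ 2) := by ring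
  refine tendsto_measure_abs_sub_ge_of_tendsto_variance (X := X) hXL2 ?_ ?_ hε
  · simpa only [hmean, mul_one] using hκ1.mul hlln
  · refine squeeze_zero (fun N => variance_nonneg _ _) hvar ?_
    simpa using tendsto_inv_atTop_nhds_zero_nat.mul
      ((tendsto_const_nhds.mul hlln).add (tendsto_const_nhds.mul (hlln.pow 2)))

/-- Proposition 5 of the paper (lemma_6a), conditionally on the sample: if the
pseudo-population replication counts `N*ᵢ` satisfy the regularity conditions P1–P3, then
the pseudo-population size satisfies `N*/N = N⁻¹ ∑ᵢ N*ᵢ dᵢ → 1` in probability. -/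
theorem stmt_18
    {Ω : Type*} [MeasurableSpace Ω] (P : Measure Ω) [IsProbabilityMeasure P]
    (c K : ℝ) (hc : 0 < c) (hK : 0 < K)
    (d : ℕ → ℕ → ℝ) (π : ℕ → ℕ → ℝ)
    (hd01 : ∀ N i, d N i = 0 ∨ d N i = 1)
    (hπ : ∀ N, ∀ i < N, 0 < π N i ∧ π N i ≤ 1)
    (hlln : Tendsto (fun N : ℕ => (N : ℝ)⁻¹ * ∑ i ∈ Finset.range N, d N i / π N i) atTop
      (𝓝 1))
    (Nstar : ℕ → ℕ → Ω → ℝ)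
    (hNstar0 : ∀ N i ω, 0 ≤ Nstar N i ω)
    (hNstarmeas : ∀ N i, Measurable (Nstar N i))
    (hNstarL2 : ∀ N, ∀ i < N, MemLp (Nstar N i) 2 P)
    (κ1 κ2 κ3 : ℕ → ℝ)
    (hκ1 : Tendsto κ1 atTop (𝓝 1))
    (hκ2 : ∀ N, κ2 N ≤ K) (hκ3 : ∀ N, κ3 N ≤ K)
    -- P1: conditional mean of the replication counts
    (hP1 : ∀ N, ∀ i < N, ∫ ω, Nstar N i ω ∂P = (π N i)⁻¹ * d N i * κ1 N)
    -- P2: conditional variance bound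
    (hP2 : ∀ N, ∀ i < N, variance (Nstar N i) P ≤ (π N i)⁻¹ * d N i * κ2 N)
    -- P3: conditional covariance bound
    (hP3 : ∀ N, ∀ i < N, ∀ h < N, i ≠ h →
      |∫ ω, (Nstar N i ω - ∫ ω', Nstar N i ω' ∂P) *
          (Nstar N h ω - ∫ ω', Nstar N h ω' ∂P) ∂P| ≤
        c / N * ((π N i)⁻¹ * (π N h)⁻¹ * d N i * d N h * κ3 N)) :
    ∀ ε > (0 : ℝ),
      Tendsto (fun N : ℕ =>
          P {ω | ε ≤ |(N : ℝ)⁻¹ * (∑ i ∈ Finset.range N, Nstar N i ω * d N i) - 1|})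
        atTop (𝓝 0) :=
  stmt_18_general P c K hc hK d π hd01 hπ hlln Nstar hNstarL2 κ1 κ2 κ3 hκ1 hκ2 hκ3 hP1 hP2 hP3
end
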